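/- Marginal approximation of a conjunctive Gram matrix: for any Gram matrix V = Σ_{j=1}^k w_j² ⊗_{i=1}^d V_i^{(j)} (a sum of Kronecker products of symmetric n_i×n_i matrices), there exists a weight vector w ∈ ℝ^{2^d} such that tr[G(u) V] = tr[G(u) G(w)] for all u ∈ ℝ^{2^d}. -/
import Mathlib


open Matrix

set_option maxHeartbeats 1000000

instance fintypeIte (p : Prop) [Decidable p] (α β : Type) [Fintype α] [Fintype β] :
    Fintype (if p then α else β) := by
  by_cases h : p
  · rw [if_pos h]; infer_instance
  · rw [if_neg h]; infer_instance

instance decEqIte (p : Prop) [Decidable p] (α β : Type) [DecidableEq α] [DecidableEq β] :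
    DecidableEq (if p then α else β) := by
  by_cases h : p
  · rw [if_pos h]; infer_instance
  · rw [if_neg h]; infer_instance

/-- Row index type for the query matrix of the marginal `a`: one coordinate for each
attribute `i` with `a i = true`, and a trivial coordinate otherwise. -/
def RowIdx {d : ℕ} (n : Fin d → ℕ) (a : Fin d → Bool) : Type :=
  ∀ i, if a i then Fin (n i) else Unit

instance {d : ℕ} (n : Fin d → ℕ) (a : Fin d → Bool) : Fintype (RowIdx n a) := by
  unfold RowIdx; infer_instance

instance {d : ℕ} (n : Fin d → ℕ) (a : Fin d → Bool) : DecidableEq (RowIdx n a) := by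
  unfold RowIdx; infer_instance

/-- `c(a) = ∏ᵢ [nᵢ if aᵢ = 0 else 1]`. -/
def cvec {d : ℕ} (n : Fin d → ℕ) (a : Fin d → Bool) : ℝ :=
  ∏ i, if a i then 1 else (n i : ℝ)

/-- `H(a) = ⊗ᵢ [𝟏 if aᵢ = 0, I if aᵢ = 1]`. -/
def Hmat {d : ℕ} (n : Fin d → ℕ) (a : Fin d → Bool) :
    Matrix (∀ i, Fin (n i)) (∀ i, Fin (n i)) ℝ :=
  fun q t => ∏ i, if a i then (if q i = t i then 1 else 0) else 1

/-- `G(v) = Σ_a v(a) H(a)`: a marginal Gram matrix. -/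
noncomputable def Gmat {d : ℕ} (n : Fin d → ℕ) (v : (Fin d → Bool) → ℝ) :
    Matrix (∀ i, Fin (n i)) (∀ i, Fin (n i)) ℝ :=
  ∑ a, v a • Hmat n a

/-- `Q(a) = ⊗ᵢ [T if aᵢ = 0, I if aᵢ = 1]`: the query matrix of the marginal `a`. -/
def Qmat {d : ℕ} (n : Fin d → ℕ) (a : Fin d → Bool) :
    Matrix (RowIdx n a) (∀ i, Fin (n i)) ℝ :=
  fun r t => ∏ i, if h : a i then (if cast (if_pos h) (r i) = t i then 1 else 0) else 1

/-- `M(u)`: the vertical stacking of `u(a) • Q(a)` over all marginals `a`. -/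
def Mmat {d : ℕ} (n : Fin d → ℕ) (u : (Fin d → Bool) → ℝ) :
    Matrix ((a : Fin d → Bool) × RowIdx n a) (∀ i, Fin (n i)) ℝ :=
  fun r t => u r.1 * Qmat n r.1 r.2 t

/-- The `d`-fold Kronecker product `A₁ ⊗ ⋯ ⊗ A_d`, represented as a matrix indexed by tuples. -/
def kronPi {d : ℕ} {nn : Fin d → ℕ} (A : ∀ i, Matrix (Fin (nn i)) (Fin (nn i)) ℝ) :
    Matrix (∀ i, Fin (nn i)) (∀ i, Fin (nn i)) ℝ :=
  fun q t => ∏ i, A i (q i) (t i)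

def onesM (m : ℕ) : Matrix (Fin m) (Fin m) ℝ := fun _ _ => 1

def pairPiEquiv {d : ℕ} (n : Fin d → ℕ) :
    ((∀ i, Fin (n i)) × (∀ i, Fin (n i))) ≃ (∀ i, Fin (n i) × Fin (n i)) where
  toFun p i := (p.1 i, p.2 i)
  invFun f := (fun i => (f i).1, fun i => (f i).2)
  left_inv p := rfl
  right_inv f := rfl

lemma trace_kron {d : ℕ} {n : Fin d → ℕ} (A B : ∀ i, Matrix (Fin (n i)) (Fin (n i)) ℝ) :
    (kronPi A * kronPi B).trace = ∏ i, (A i * B i).trace := by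
  classical
  have h1 : ∀ i, (A i * B i).trace
      = ∑ p : Fin (n i) × Fin (n i), A i p.1 p.2 * B i p.2 p.1 := by
    intro i
    rw [Fintype.sum_prod_type]
    simp only [Matrix.trace, Matrix.diag, Matrix.mul_apply]
  rw [Finset.prod_congr rfl (fun i _ => h1 i), Fintype.prod_sum]
  rw [← Equiv.sum_comp (pairPiEquiv n)]
  rw [Fintype.sum_prod_type]
  simp only [Matrix.trace, Matrix.diag, Matrix.mul_apply, kronPi, ← Finset.prod_mul_distrib]
  rfl

def Hfac {d : ℕ} (n : Fin d → ℕ) (a : Fin d → Bool) (i : Fin d) :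
    Matrix (Fin (n i)) (Fin (n i)) ℝ :=
  if a i then 1 else onesM (n i)

lemma Hmat_eq_kron {d : ℕ} (n : Fin d → ℕ) (a : Fin d → Bool) :
    Hmat n a = kronPi (Hfac n a) := by
  funext q t
  refine Finset.prod_congr rfl fun i _ => ?_
  unfold Hfac onesM
  by_cases h : a i <;> simp [h, Matrix.one_apply]

lemma trace_G_mul {d : ℕ} (n : Fin d → ℕ) (u : (Fin d → Bool) → ℝ) {ι : Type*} [Fintype ι]
    (s : ι → ℝ) (Y : ι → ∀ i, Matrix (Fin (n i)) (Fin (n i)) ℝ) :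
    (Gmat n u * ∑ j, s j • kronPi (Y j)).trace =
    ∑ a, ∑ j, u a * s j * ∏ i, (Hfac n a i * Y j i).trace := by
  unfold Gmat
  rw [Finset.sum_mul, Matrix.trace_sum]
  refine Finset.sum_congr rfl fun a _ => ?_
  rw [Finset.mul_sum, Matrix.trace_sum]
  refine Finset.sum_congr rfl fun j _ => ?_
  rw [Matrix.smul_mul, Matrix.mul_smul, Hmat_eq_kron, smul_smul, Matrix.trace_smul,
    trace_kron, smul_eq_mul]

lemma coeffs (m : ℕ) (hm : 0 < m) (M : Matrix (Fin m) (Fin m) ℝ) :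
    ∃ b c : ℝ, b * m + c * m = M.trace ∧ b * m + c * m ^ 2 = ∑ p, ∑ q, M p q := by
  by_cases h1 : m = 1
  · subst h1
    refine ⟨M 0 0, 0, ?_, ?_⟩ <;>
      simp [Matrix.trace, Matrix.diag, Fin.sum_univ_one]
  · have h2 : (2 : ℕ) ≤ m := by omega
    have hm0 : (m : ℝ) ≠ 0 := Nat.cast_ne_zero.mpr (by omega)
    have hm1 : (m : ℝ) - 1 ≠ 0 := by
      have : (1 : ℝ) < m := by exact_mod_cast (by omega : 1 < m)
      intro h; nlinarith
    set t := M.trace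
    set S := ∑ p, ∑ q, M p q
    refine ⟨t / m - (S - t) / (m * (m - 1)), (S - t) / (m * (m - 1)), ?_, ?_⟩ <;>
      field_simp <;> ring

lemma sum_bool_pi_prod {d : ℕ} (g : Fin d → Bool → ℝ) :
    ∑ b : Fin d → Bool, ∏ i, g i (b i) = ∏ i, (g i true + g i false) := by
  rw [← Fintype.prod_sum]
  refine Finset.prod_congr rfl fun i _ => ?_
  rw [Fintype.sum_bool]

lemma trace_ones_mul (m : ℕ) (M : Matrix (Fin m) (Fin m) ℝ) :
    (onesM m * M).trace = ∑ p, ∑ q, M p q := by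
  simp only [Matrix.trace, Matrix.diag, Matrix.mul_apply, onesM, one_mul]
  exact Finset.sum_comm

lemma trace_one_mul' (m : ℕ) (M : Matrix (Fin m) (Fin m) ℝ) :
    ((1 : Matrix (Fin m) (Fin m) ℝ) * M).trace = M.trace := by rw [one_mul]

lemma key_i (m : ℕ) (bc cc : ℝ) (M : Matrix (Fin m) (Fin m) ℝ)
    (h1 : bc * m + cc * m = M.trace) (h2 : bc * m + cc * m ^ 2 = ∑ p, ∑ q, M p q)
    (F : Matrix (Fin m) (Fin m) ℝ) (hF : F = 1 ∨ F = onesM m) :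
    bc * (F * 1).trace + cc * (F * onesM m).trace = (F * M).trace := by
  have htr1 : (1 : Matrix (Fin m) (Fin m) ℝ).trace = m := by
    simp [Matrix.trace_one]
  have htrones : (onesM m).trace = m := by
    simp [Matrix.trace, Matrix.diag, onesM]
  rcases hF with h | h <;> subst h
  · rw [one_mul, one_mul, one_mul, htr1, htrones, h1]
  · rw [mul_one, trace_ones_mul, trace_ones_mul]
    have : (∑ p, ∑ q, (onesM m : Matrix (Fin m) (Fin m) ℝ) p q) = (m : ℝ) ^ 2 := by
      simp [onesM]; ring
    rw [htrones, this, h2]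

/-- Marginal approximation of a conjunctive Gram matrix: for any Gram matrix
`V = Σⱼ wⱼ² ⊗ᵢ Vᵢ⁽ʲ⁾` (sum of Kronecker products of symmetric matrices), there is a weight
vector `w` with `tr[G(u) V] = tr[G(u) G(w)]` for all `u`. -/
theorem marginal_approximation {d k : ℕ} (n : Fin d → ℕ)
    (wts : Fin k → ℝ) (Vf : Fin k → ∀ i, Matrix (Fin (n i)) (Fin (n i)) ℝ)
    (hsym : ∀ j i, (Vf j i)ᵀ = Vf j i) :
    ∃ w : (Fin d → Bool) → ℝ,
      ∀ u : (Fin d → Bool) → ℝ,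
        (Gmat n u * ∑ j, (wts j) ^ 2 • kronPi (Vf j)).trace =
        (Gmat n u * Gmat n w).trace := by
  classical
  by_cases hn : ∀ i, 0 < n i
  · choose bco cco hbc1 hbc2 using fun j i => coeffs (n i) (hn i) (Vf j i)
    refine ⟨fun bb => ∑ j, wts j ^ 2 * ∏ i, (if bb i then bco j i else cco j i),
      fun u => ?_⟩
    have hG : Gmat n (fun bb => ∑ j, wts j ^ 2 * ∏ i, (if bb i then bco j i else cco j i))
        = ∑ bb : Fin d → Bool,
            (∑ j, wts j ^ 2 * ∏ i, (if bb i then bco j i else cco j i)) •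
              kronPi (Hfac n bb) :=
      Finset.sum_congr rfl fun bb _ => by rw [Hmat_eq_kron]
    rw [trace_G_mul, hG, trace_G_mul]
    refine Finset.sum_congr rfl fun a _ => ?_
    have inner : ∀ j : Fin k,
        ∑ bb : Fin d → Bool,
            (∏ i, (if bb i then bco j i else cco j i)) *
              ∏ i, (Hfac n a i * Hfac n bb i).trace
          = ∏ i, (Hfac n a i * Vf j i).trace := by
      intro j
      calc ∑ bb : Fin d → Bool,
              (∏ i, (if bb i then bco j i else cco j i)) *
                ∏ i, (Hfac n a i * Hfac n bb i).trace
          = ∑ bb : Fin d → Bool,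
              ∏ i, ((if bb i then bco j i else cco j i) *
                (Hfac n a i * (if bb i then 1 else onesM (n i))).trace) := by
            refine Finset.sum_congr rfl fun bb _ => ?_
            rw [← Finset.prod_mul_distrib]
            rfl
        _ = ∏ i, (bco j i * (Hfac n a i * 1).trace +
              cco j i * (Hfac n a i * onesM (n i)).trace) := by
            rw [sum_bool_pi_prod (fun i β => (if β then bco j i else cco j i) *
              (Hfac n a i * (if β then 1 else onesM (n i))).trace)]
            simp
        _ = ∏ i, (Hfac n a i * Vf j i).trace := by
            refine Finset.prod_congr rfl fun i _ => ?_
            refine key_i (n i) _ _ _ (hbc1 j i) (hbc2 j i) _ ?_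
            unfold Hfac
            by_cases h : a i
            · left; rw [if_pos h]
            · right; rw [if_neg h]
    symm
    calc ∑ bb : Fin d → Bool,
            u a * (∑ j', wts j' ^ 2 * ∏ i, (if bb i then bco j' i else cco j' i)) *
              ∏ i, (Hfac n a i * Hfac n bb i).trace
        = ∑ bb : Fin d → Bool, ∑ j', (u a * wts j' ^ 2) *
            ((∏ i, (if bb i then bco j' i else cco j' i)) *
              ∏ i, (Hfac n a i * Hfac n bb i).trace) := by
          refine Finset.sum_congr rfl fun bb _ => ?_
          rw [Finset.mul_sum, Finset.sum_mul]
          exact Finset.sum_congr rfl fun j' _ => by ring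
      _ = ∑ j', ∑ bb : Fin d → Bool, (u a * wts j' ^ 2) *
            ((∏ i, (if bb i then bco j' i else cco j' i)) *
              ∏ i, (Hfac n a i * Hfac n bb i).trace) := Finset.sum_comm
      _ = ∑ j', (u a * wts j' ^ 2) *
            ∑ bb : Fin d → Bool, ((∏ i, (if bb i then bco j' i else cco j' i)) *
              ∏ i, (Hfac n a i * Hfac n bb i).trace) := by
          exact Finset.sum_congr rfl fun j' _ => (Finset.mul_sum _ _ _).symm
      _ = ∑ j', u a * wts j' ^ 2 * ∏ i, (Hfac n a i * Vf j' i).trace := by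
          exact Finset.sum_congr rfl fun j' _ => by rw [inner j', mul_assoc]
  · push_neg at hn
    obtain ⟨i, hi⟩ := hn
    have hi0 : n i = 0 := by omega
    haveI : IsEmpty (∀ i, Fin (n i)) := ⟨fun f => Fin.elim0 (hi0 ▸ f i)⟩
    exact ⟨0, fun u => by simp [Matrix.trace]⟩
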